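/- arXiv:1812.03174 — 5 statements merged into one kernel-verified Lean document; each statement's English description precedes it below -/
import Mathlib

section
/- Let 𝒱 be a family of compact convex subsets of ℝ^d that is closed under translations and such that every ball in ℝ^d is contained in some member of 𝒱. Then for any probability measure μ on ℝ^d there exists a point x ∈ ℝ^d with D(x; μ, 𝒱) ≥ 1/(d+1), where D(x; μ, 𝒱) = 1 − sup{μ(V) : V ∈ 𝒱, x ∉ V}. -/
set_option maxHeartbeats 1000000
open MeasureTheory
open scoped ENNReal

theorem exists_point_depth_ge_inv_dim_add_one (d : ℕ)
    (𝒱 : Set (Set (EuclideanSpace ℝ (Fin d)))) (hne : 𝒱.Nonempty)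
    (hcompact : ∀ V ∈ 𝒱, IsCompact V) (hconv : ∀ V ∈ 𝒱, Convex ℝ V)
    (htrans : ∀ V ∈ 𝒱, ∀ v : EuclideanSpace ℝ (Fin d), (fun y => y + v) '' V ∈ 𝒱)
    (hball : ∀ (c : EuclideanSpace ℝ (Fin d)) (r : ℝ),
      ∃ V ∈ 𝒱, Metric.closedBall c r ⊆ V)
    (μ : Measure (EuclideanSpace ℝ (Fin d))) [IsProbabilityMeasure μ] :
    ∃ x : EuclideanSpace ℝ (Fin d),
      (1 : ℝ≥0∞) / ((d : ℝ≥0∞) + 1) ≤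
        1 - ⨆ V ∈ 𝒱, ⨆ (_ : x ∉ V), μ V := by
  classical
  set D : ℝ≥0∞ := (d : ℝ≥0∞) + 1 with hD
  have hD0 : D ≠ 0 := by simp [hD]
  have hDtop : D ≠ ∞ := by simp [hD]
  have hsum : (1 : ℝ≥0∞) / D + (d : ℝ≥0∞) / D = 1 := by
    rw [ENNReal.div_add_div_same]
    rw [show (1 : ℝ≥0∞) + d = D by rw [hD]; ring]
    exact ENNReal.div_self hD0 hDtop
  -- The family of "heavy" sets
  set F : Set (Set (EuclideanSpace ℝ (Fin d))) :=
    {V | V ∈ 𝒱 ∧ (d : ℝ≥0∞) / D < μ V} with hF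
  -- Every finite subfamily of F of size ≤ d+1 has nonempty intersection
  have h_inter : ∀ G : Finset (Set (EuclideanSpace ℝ (Fin d))),
      (G : Set (Set (EuclideanSpace ℝ (Fin d)))) ⊆ F →
      G.card ≤ Module.finrank ℝ (EuclideanSpace ℝ (Fin d)) + 1 →
      (⋂₀ (G : Set (Set (EuclideanSpace ℝ (Fin d))))).Nonempty := by
    intro G hGF hGcard
    rcases G.eq_empty_or_nonempty with rfl | hGne
    · simp
    by_contra hempty
    rw [Set.not_nonempty_iff_eq_empty] at hempty
    -- complement of the intersection is the whole space
    have hcompl : (⋃ V ∈ G, Vᶜ) = Set.univ := by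
      rw [← Set.compl_iInter₂]
      have : (⋂ V ∈ G, V) = ⋂₀ (G : Set (Set (EuclideanSpace ℝ (Fin d)))) := by
        simp [Set.sInter_eq_biInter]
      rw [this, hempty, Set.compl_empty]
    have hmeas : ∀ V ∈ G, μ Vᶜ < 1 / D := by
      intro V hV
      have hVF : V ∈ F := hGF hV
      have hVmeas : MeasurableSet V :=
        ((hcompact V hVF.1).isClosed).measurableSet
      have hμV : (d : ℝ≥0∞) / D < μ V := hVF.2
      have hμV1 : μ V ≤ 1 := prob_le_one
      rw [measure_compl hVmeas (measure_ne_top μ V), measure_univ,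
        ENNReal.sub_lt_iff_lt_right (measure_ne_top μ V) hμV1]
      calc (1 : ℝ≥0∞) = 1 / D + (d : ℝ≥0∞) / D := hsum.symm
      _ < 1 / D + μ V := by
          refine ENNReal.add_lt_add_left ?_ hμV
          simp [ENNReal.div_eq_top, hD0]
    have hsumlt : (1 : ℝ≥0∞) < 1 := by
      calc (1 : ℝ≥0∞) = μ Set.univ := (measure_univ).symm
      _ = μ (⋃ V ∈ G, Vᶜ) := by rw [hcompl]
      _ ≤ ∑ V ∈ G, μ Vᶜ := measure_biUnion_finset_le G _
      _ < ∑ V ∈ G, 1 / D := ENNReal.sum_lt_sum_of_nonempty hGne hmeas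
      _ = G.card * (1 / D) := by rw [Finset.sum_const, nsmul_eq_mul]
      _ ≤ D * (1 / D) := by
          refine mul_le_mul_left ?_ _
          have h1 : (G.card : ℝ≥0∞) ≤ (d : ℝ≥0∞) + 1 := by
            have := hGcard
            rw [finrank_euclideanSpace_fin] at this
            exact_mod_cast this
          rw [hD]; exact h1
      _ = 1 := by rw [mul_one_div, ENNReal.div_self hD0 hDtop]
    exact absurd hsumlt (lt_irrefl 1)
  -- Helly's theorem gives a common point of all heavy sets
  have hx : (⋂₀ F).Nonempty := by
    apply Convex.helly_theorem_set_compact' (𝕜 := ℝ)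
      (fun V hV => hconv V hV.1) (fun V hV => hcompact V hV.1)
    exact h_inter
  obtain ⟨x, hx⟩ := hx
  refine ⟨x, ?_⟩
  have hS : (⨆ V ∈ 𝒱, ⨆ (_ : x ∉ V), μ V) ≤ (d : ℝ≥0∞) / D := by
    refine iSup₂_le fun V hV => iSup_le fun hxV => ?_
    by_contra h
    push_neg at h
    exact hxV (hx V ⟨hV, h⟩)
  calc (1 : ℝ≥0∞) / D = 1 - (d : ℝ≥0∞) / D :=
        ENNReal.eq_sub_of_add_eq (by simp [ENNReal.div_eq_top, hD0]) hsum
  _ ≤ 1 - ⨆ V ∈ 𝒱, ⨆ (_ : x ∉ V), μ V := tsub_le_tsub_left hS 1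
end

section
/- For any probability measure μ on ℝ^d there exists a point x ∈ ℝ^d such that the Tukey (halfspace) depth of x, defined as inf over all open halfspaces H containing x of μ(H), is at least 1/(d+1). -/
/-!
Call an open halfspace light if its measure is below `1 / (d + 1)`; its complement is a closed
convex set. Add a closed ball whose complement is also light. Any `d + 1` sets of this family meet,
since the union of their complements has measure `< 1`; by Helly's theorem the whole family,
intersected with the ball, then has a common point (finitely many sets first, then all of them by
compactness). Such a point lies in no light halfspace, so its depth is at least `1 / (d + 1)`.
-/

open MeasureTheory
open scoped ENNReal RealInnerProductSpace

def IsOpenHalfspace {d : ℕ} (H : Set (EuclideanSpace ℝ (Fin d))) : Prop :=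
  ∃ (u : EuclideanSpace ℝ (Fin d)) (c : ℝ), u ≠ 0 ∧ H = {y | c < ⟪u, y⟫}

open Finset Module

namespace MeasureTheory

variable {α : Type*} [MeasurableSpace α]

lemma exists_measure_compl_closedBall_lt [PseudoMetricSpace α] [CompleteSpace α]
    [SecondCountableTopology α] [BorelSpace α]
    (μ : Measure α) [IsFiniteMeasure μ] (x : α) {ε : ℝ≥0∞} (hε : 0 < ε) :
    ∃ r : ℝ, μ (Metric.closedBall x r)ᶜ < ε := by
  have h := tendsto_measure_compl_closedBall_of_isTightMeasureSet
    (isTightMeasureSet_singleton (μ := μ)) x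
  simp only [Set.mem_singleton_iff, iSup_iSup_eq_left] at h
  exact (h.eventually_lt_const hε).exists

lemma nonempty_biInter_of_sum_measure_compl_lt_one (μ : Measure α) [IsProbabilityMeasure μ]
    {ι : Type*} {G : ι → Set α} {s : Finset ι} (h : ∑ i ∈ s, μ (G i)ᶜ < 1) :
    (⋂ i ∈ s, G i).Nonempty := by
  have hlt : μ (⋃ i ∈ s, (G i)ᶜ) < μ Set.univ :=
    measure_univ (μ := μ) ▸ (measure_biUnion_finset_le s _).trans_lt h
  simpa only [Set.compl_iUnion₂, compl_compl] using
    Set.nonempty_compl.2 fun hU => hlt.ne (congrArg μ hU)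

lemma nonempty_biInter_of_measure_compl_lt (μ : Measure α) [IsProbabilityMeasure μ]
    {ι : Type*} {G : ι → Set α} {s : Finset ι} {n : ℕ} (hs : #s ≤ n + 1)
    (hG : ∀ i ∈ s, μ (G i)ᶜ < 1 / (n + 1)) :
    (⋂ i ∈ s, G i).Nonempty := by
  refine nonempty_biInter_of_sum_measure_compl_lt_one μ ?_
  rcases s.eq_empty_or_nonempty with rfl | hne
  · simp
  calc ∑ i ∈ s, μ (G i)ᶜ < ∑ _i ∈ s, 1 / ((n : ℝ≥0∞) + 1) :=
        ENNReal.sum_lt_sum_of_nonempty hne hG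
    _ = #s / ((n : ℝ≥0∞) + 1) := by rw [sum_const, nsmul_eq_mul, mul_one_div]
    _ ≤ 1 := by
      rw [ENNReal.div_le_iff (by simp) (by simp), one_mul]
      exact_mod_cast hs

end MeasureTheory

section Helly

variable {E : Type*} [NormedAddCommGroup E] [NormedSpace ℝ E] [FiniteDimensional ℝ E]
  [MeasurableSpace E] [BorelSpace E]

theorem Convex.nonempty_iInter_of_measure_compl_lt (μ : Measure E) [IsProbabilityMeasure μ]
    {ι : Type*} {F : ι → Set E} (hconv : ∀ i, Convex ℝ (F i))
    (hclosed : ∀ i, IsClosed (F i))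
    (hF : ∀ i, μ (F i)ᶜ < 1 / (finrank ℝ E + 1)) :
    (⋂ i, F i).Nonempty := by
  classical
  obtain ⟨r, hr⟩ := exists_measure_compl_closedBall_lt μ 0
    (ε := 1 / (finrank ℝ E + 1)) (ENNReal.div_pos one_ne_zero (by simp))
  let G : Option ι → Set E := fun o => o.elim (Metric.closedBall 0 r) F
  have hG : ∀ o, Convex ℝ (G o) ∧ μ (G o)ᶜ < 1 / (finrank ℝ E + 1) := by
    rintro (_ | i)
    exacts [⟨convex_closedBall 0 r, hr⟩, ⟨hconv i, hF i⟩]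
  suffices (⋂ i, F i ∩ Metric.closedBall 0 r).Nonempty from
    this.mono (Set.iInter_mono fun i => Set.inter_subset_left)
  refine Convex.helly_theorem_compact' (fun i => (hconv i).inter (convex_closedBall 0 r))
    (fun i => (isCompact_closedBall 0 r).inter_left (hclosed i)) fun I _ => ?_
  obtain ⟨x, hx⟩ := Convex.helly_theorem' (F := G) (s := insert none (I.map .some))
    (fun o _ => (hG o).1) fun J _ hJ =>
      nonempty_biInter_of_measure_compl_lt μ hJ fun o _ => (hG o).2
  simp only [Set.mem_iInter₂, Finset.mem_insert, Finset.mem_map] at hx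
  exact ⟨x, Set.mem_iInter₂.2 fun i hi =>
    ⟨hx (some i) (Or.inr ⟨i, hi, rfl⟩), hx none (Or.inl rfl)⟩⟩

end Helly

namespace IsOpenHalfspace

variable {d : ℕ} {H : Set (EuclideanSpace ℝ (Fin d))}

lemma isClosed_compl (hH : IsOpenHalfspace H) : IsClosed Hᶜ := by
  obtain ⟨u, c, -, rfl⟩ := hH
  exact (isOpen_lt continuous_const (continuous_const.inner continuous_id)).isClosed_compl

lemma convex_compl (hH : IsOpenHalfspace H) : Convex ℝ Hᶜ := by
  obtain ⟨u, c, -, rfl⟩ := hH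
  simpa only [Set.compl_ofPred, not_lt, innerₛₗ_apply_apply] using
    convex_halfSpace_le (innerₛₗ ℝ u).isLinear c

end IsOpenHalfspace

theorem exists_point_tukey_depth_ge_inv_dim_add_one (d : ℕ)
    (μ : Measure (EuclideanSpace ℝ (Fin d))) [IsProbabilityMeasure μ] :
    ∃ x : EuclideanSpace ℝ (Fin d),
      (1 : ℝ≥0∞) / ((d : ℝ≥0∞) + 1) ≤
        ⨅ (H : Set (EuclideanSpace ℝ (Fin d))) (_ : IsOpenHalfspace H) (_ : x ∈ H), μ H := by
  let Light := {H : Set (EuclideanSpace ℝ (Fin d)) // IsOpenHalfspace H ∧ μ H < 1 / (d + 1)}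
  obtain ⟨x, hx⟩ := Convex.nonempty_iInter_of_measure_compl_lt μ (F := fun H : Light => H.1ᶜ)
    (fun H => H.2.1.convex_compl) (fun H => H.2.1.isClosed_compl)
    (fun H => by simpa only [compl_compl, finrank_euclideanSpace_fin] using H.2.2)
  refine ⟨x, le_iInf₂ fun H hH => le_iInf fun hxH => ?_⟩
  by_contra! hlight
  exact Set.mem_iInter.1 hx ⟨H, hH, hlight⟩ hxH
end

section
/- For any probability measure μ on ℝ^d and any x ∈ ℝ^d, the Tukey depth of x equals 1 − sup{μ(B) : B a closed ball with x ∉ B}; i.e., the family of closed halfspaces and the family of closed balls are depth-equivalent. -/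
open MeasureTheory
open scoped ENNReal RealInnerProductSpace

/-!
A closed ball `B` missing `x` lies in a closed halfspace missing `x` (separate along `x - z`),
whose complement is an open halfspace containing `x`; hence `μ B ≤ 1 - depth`. Conversely, a
closed halfspace `⟪u, ·⟫ ≤ c` missing `x` is covered by the increasing balls of radius `t ‖u‖`
tangent to a parallel hyperplane `⟪u, ·⟫ = a`, `c < a < ⟪u, x⟫`, at a fixed point; they all
miss `x`, and continuity of measure from below bounds the halfspace by the supremum over balls.
-/

open Metric Set

section TangentBall

variable {E : Type*} [NormedAddCommGroup E] [InnerProductSpace ℝ E]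

/-- Touches the hyperplane `⟪u, ·⟫ = ⟪u, p⟫` at `p` from the side of `-u`. -/
def tangentBall (u p : E) (t : ℝ) : Set E :=
  closedBall (p - t • u) (t * ‖u‖)

theorem tangentBall_subset_halfspace (u p : E) (t : ℝ) :
    tangentBall u p t ⊆ {y | ⟪u, y⟫ ≤ ⟪u, p⟫} := by
  intro y hy
  have hdist : ‖y - (p - t • u)‖ ≤ t * ‖u‖ := by rwa [← dist_eq_norm]
  have hinner : ⟪u, y⟫ = ⟪u, y - (p - t • u)⟫ + ⟪u, p⟫ - t * ‖u‖ ^ 2 := by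
    rw [inner_sub_right, inner_sub_right, real_inner_smul_right, real_inner_self_eq_norm_sq]
    ring
  have hcs := real_inner_le_norm u (y - (p - t • u))
  have := mul_le_mul_of_nonneg_left hdist (norm_nonneg u)
  change ⟪u, y⟫ ≤ ⟪u, p⟫
  nlinarith

theorem monotone_tangentBall (u p : E) : Monotone (tangentBall u p) := by
  intro s t hst
  refine closedBall_subset_closedBall' (le_of_eq ?_)
  have hcenter : p - s • u - (p - t • u) = (t - s) • u := by module
  rw [dist_eq_norm, hcenter, norm_smul, Real.norm_of_nonneg (sub_nonneg.mpr hst)]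
  ring

theorem dist_sub_smul_sq (y p u : E) (t : ℝ) :
    dist y (p - t • u) ^ 2 = ‖y - p‖ ^ 2 + 2 * t * (⟪u, y⟫ - ⟪u, p⟫) + (t * ‖u‖) ^ 2 := by
  have hsplit : y - (p - t • u) = (y - p) + t • u := by abel
  rw [dist_eq_norm, hsplit, norm_add_sq_real, real_inner_smul_right, norm_smul,
    Real.norm_eq_abs, real_inner_comm, inner_sub_right, mul_pow, sq_abs]
  ring

theorem halfspace_subset_iUnion_tangentBall (u p : E) :
    {y | ⟪u, y⟫ < ⟪u, p⟫} ⊆ ⋃ n : ℕ, tangentBall u p n := by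
  intro y hy
  set δ := ⟪u, p⟫ - ⟪u, y⟫
  have hδ : 0 < δ := sub_pos.mpr hy
  obtain ⟨n, hn⟩ := exists_nat_ge (‖y - p‖ ^ 2 / (2 * δ))
  have hn' : ‖y - p‖ ^ 2 ≤ 2 * n * δ := by
    rw [div_le_iff₀ (by positivity)] at hn
    linarith
  refine mem_iUnion.mpr ⟨n, mem_closedBall.mpr ?_⟩
  rw [← pow_le_pow_iff_left₀ dist_nonneg (by positivity) two_ne_zero, dist_sub_smul_sq]
  linarith

theorem exists_halfspace_superset_closedBall {x z : E} {r : ℝ} (hr : 0 ≤ r)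
    (hx : x ∉ closedBall z r) :
    ∃ u : E, ∃ c : ℝ, u ≠ 0 ∧ c < ⟪u, x⟫ ∧ closedBall z r ⊆ {y | ⟪u, y⟫ ≤ c} := by
  have hrx : r < ‖x - z‖ := by simpa [dist_eq_norm] using hx
  have hu : x - z ≠ 0 := norm_pos_iff.mp (hr.trans_lt hrx)
  refine ⟨x - z, ⟪x - z, z⟫ + r * ‖x - z‖, hu, ?_, fun y hy => ?_⟩
  · have : ⟪x - z, x⟫ = ⟪x - z, z⟫ + ‖x - z‖ ^ 2 := by
      rw [← real_inner_self_eq_norm_sq, inner_sub_right]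
      ring
    nlinarith [norm_nonneg (x - z)]
  · have hyz : ‖y - z‖ ≤ r := by rwa [← dist_eq_norm]
    have hcs := real_inner_le_norm (x - z) (y - z)
    have := mul_le_mul_of_nonneg_left hyz (norm_nonneg (x - z))
    change ⟪x - z, y⟫ ≤ _
    rw [inner_sub_right] at hcs
    linarith

variable [MeasurableSpace E]

theorem prob_inner_le_eq_one_sub [OpensMeasurableSpace E] (μ : Measure E)
    [IsProbabilityMeasure μ] (u : E) (c : ℝ) :
    μ {y | ⟪u, y⟫ ≤ c} = 1 - μ {y | c < ⟪u, y⟫} := by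
  have hopen : IsOpen {y : E | c < ⟪u, y⟫} := isOpen_lt continuous_const (by fun_prop)
  rw [← prob_compl_eq_one_sub hopen.measurableSet]
  congr 1
  ext
  simp

theorem measure_halfspace_le_iSup_measure_closedBall (μ : Measure E) {u x : E} {c : ℝ}
    (hu : u ≠ 0) (hc : c < ⟪u, x⟫) :
    μ {y | ⟪u, y⟫ ≤ c} ≤
      ⨆ (z : E) (r : ℝ) (_ : 0 ≤ r) (_ : x ∉ closedBall z r), μ (closedBall z r) := by
  obtain ⟨a, hca, hax⟩ := exists_between hc
  set p : E := (a / ‖u‖ ^ 2) • u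
  have hp : ⟪u, p⟫ = a := by
    rw [real_inner_smul_right, real_inner_self_eq_norm_sq]
    field_simp [norm_ne_zero_iff.mpr hu]
  have hcover : {y | ⟪u, y⟫ ≤ c} ⊆ ⋃ n : ℕ, tangentBall u p n := fun y hy =>
    halfspace_subset_iUnion_tangentBall u p (lt_of_le_of_lt hy (hp ▸ hca))
  have hxn (n : ℕ) : x ∉ closedBall (p - (n : ℝ) • u) (n * ‖u‖) := fun hx =>
    (tangentBall_subset_halfspace u p n hx).not_gt (hp ▸ hax)
  calc μ {y | ⟪u, y⟫ ≤ c} ≤ μ (⋃ n : ℕ, tangentBall u p n) := measure_mono hcover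
    _ = ⨆ n : ℕ, μ (closedBall (p - (n : ℝ) • u) (n * ‖u‖)) :=
      ((monotone_tangentBall u p).comp Nat.mono_cast).measure_iUnion
    _ ≤ _ := iSup_le fun n => le_iSup₂_of_le (p - (n : ℝ) • u) ((n : ℝ) * ‖u‖) <| by
      rw [iSup_pos (by positivity), iSup_pos (hxn n)]

end TangentBall

section TukeyDepth

variable {d : ℕ} (μ : Measure (EuclideanSpace ℝ (Fin d))) (x : EuclideanSpace ℝ (Fin d))

theorem iInf_measure_halfspace_le {u : EuclideanSpace ℝ (Fin d)} {c : ℝ} (hu : u ≠ 0)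
    (hx : c < ⟪u, x⟫) :
    ⨅ (H : Set (EuclideanSpace ℝ (Fin d))) (_ : IsOpenHalfspace H) (_ : x ∈ H), μ H ≤
      μ {y | c < ⟪u, y⟫} :=
  iInf₂_le_of_le _ ⟨u, c, hu, rfl⟩ (iInf_le _ hx)

variable [IsProbabilityMeasure μ]

theorem iInf_measure_halfspace_le_one (hd : 0 < d) :
    ⨅ (H : Set (EuclideanSpace ℝ (Fin d))) (_ : IsOpenHalfspace H) (_ : x ∈ H), μ H ≤ 1 := by
  have : Nonempty (Fin d) := ⟨⟨0, hd⟩⟩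
  obtain ⟨u, hu⟩ := exists_ne (0 : EuclideanSpace ℝ (Fin d))
  exact (iInf_measure_halfspace_le μ x hu (sub_one_lt _)).trans prob_le_one

theorem iSup_measure_closedBall_le_one_sub_iInf :
    ⨆ (z : EuclideanSpace ℝ (Fin d)) (r : ℝ) (_ : 0 ≤ r) (_ : x ∉ closedBall z r),
        μ (closedBall z r) ≤
      1 - ⨅ (H : Set (EuclideanSpace ℝ (Fin d))) (_ : IsOpenHalfspace H) (_ : x ∈ H), μ H := by
  refine iSup₂_le fun z r => iSup₂_le fun hr hx => ?_
  obtain ⟨u, c, hu, hxc, hball⟩ := exists_halfspace_superset_closedBall hr hx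
  calc μ (closedBall z r) ≤ μ {y | ⟪u, y⟫ ≤ c} := measure_mono hball
    _ = 1 - μ {y | c < ⟪u, y⟫} := prob_inner_le_eq_one_sub μ u c
    _ ≤ _ := tsub_le_tsub_left (iInf_measure_halfspace_le μ x hu hxc) 1

theorem one_sub_iSup_measure_closedBall_le_iInf :
    1 - ⨆ (z : EuclideanSpace ℝ (Fin d)) (r : ℝ) (_ : 0 ≤ r) (_ : x ∉ closedBall z r),
        μ (closedBall z r) ≤
      ⨅ (H : Set (EuclideanSpace ℝ (Fin d))) (_ : IsOpenHalfspace H) (_ : x ∈ H), μ H := by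
  refine le_iInf₂ fun _ ⟨u, c, hu, hH⟩ => hH ▸ le_iInf fun hx => ?_
  calc 1 - _ ≤ 1 - μ {y | ⟪u, y⟫ ≤ c} :=
        tsub_le_tsub_left (measure_halfspace_le_iSup_measure_closedBall μ hu hx) 1
    _ = μ {y | c < ⟪u, y⟫} := by
      rw [prob_inner_le_eq_one_sub, ENNReal.sub_sub_cancel ENNReal.one_ne_top prob_le_one]

end TukeyDepth

theorem tukey_depth_eq_ball_depth (d : ℕ) (hd : 0 < d)
    (μ : Measure (EuclideanSpace ℝ (Fin d))) [IsProbabilityMeasure μ]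
    (x : EuclideanSpace ℝ (Fin d)) :
    (⨅ (H : Set (EuclideanSpace ℝ (Fin d))) (_ : IsOpenHalfspace H) (_ : x ∈ H), μ H) =
      1 - ⨆ (c : EuclideanSpace ℝ (Fin d)) (r : ℝ) (_ : 0 ≤ r)
            (_ : x ∉ Metric.closedBall c r), μ (Metric.closedBall c r) := by
  refine le_antisymm ?_ (one_sub_iSup_measure_closedBall_le_iInf μ x)
  calc _ = 1 - (1 - _) :=
        (ENNReal.sub_sub_cancel ENNReal.one_ne_top (iInf_measure_halfspace_le_one μ x hd)).symm
    _ ≤ _ := tsub_le_tsub_left (iSup_measure_closedBall_le_one_sub_iInf μ x) 1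
end

section
/- For a sample of size n in ℝ^d with empirical measure μ, and k ∈ {1,…,n}, the level set S_{k/n} = {x : D(x) ≥ k/n} equals the intersection of all closed balls B containing at least n − k + 1 sample points, where D(x) is the ball-based depth 1 − sup{μ(B) : B closed ball, x ∉ B}. -/
open Metric

/-! The depth of `p` is at least `k / n` exactly when every closed ball avoiding `p` holds at most
`n - k` sample points, i.e. when every closed ball holding at least `n - k + 1` sample points
contains `p`. -/

-- `0 ≤ a` covers `s = ∅`, where `sSup ∅ = 0`.
theorem Real.sSup_le_iff_of_nonneg {s : Set ℝ} {a : ℝ} (hs : BddAbove s) (ha : 0 ≤ a) :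
    sSup s ≤ a ↔ ∀ r ∈ s, r ≤ a :=
  ⟨fun h _ hr => (le_csSup hs hr).trans h, fun h => Real.sSup_le h ha⟩

theorem Nat.cast_div_le_one_sub_cast_div_iff {m n k : ℕ} (hn : 0 < n) (hkn : k ≤ n) :
    (m : ℝ) / n ≤ 1 - (k : ℝ) / n ↔ m ≤ n - k := by
  have hn' : (0 : ℝ) < n := Nat.cast_pos.mpr hn
  rw [one_sub_div hn'.ne', div_le_div_iff_of_pos_right hn', ← Nat.cast_sub hkn, Nat.cast_le]

noncomputable def sampleCount {α : Type*} {n : ℕ} (x : Fin n → α) (s : Set α) : ℕ :=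
  {i | x i ∈ s}.ncard

theorem sampleCount_le {α : Type*} {n : ℕ} (x : Fin n → α) (s : Set α) : sampleCount x s ≤ n := by
  simpa [sampleCount] using Set.ncard_le_card {i | x i ∈ s}

section BallDepth

variable {E : Type*} [PseudoMetricSpace E] {n : ℕ}

noncomputable def ballDepth (x : Fin n → E) (p : E) : ℝ :=
  1 - sSup {r : ℝ | ∃ (c : E) (rad : ℝ), 0 ≤ rad ∧ p ∉ closedBall c rad ∧
    r = (sampleCount x (closedBall c rad) : ℝ) / n}

theorem div_le_ballDepth_iff {k : ℕ} (hn : 0 < n) (hkn : k ≤ n) (x : Fin n → E) (p : E) :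
    (k : ℝ) / n ≤ ballDepth x p ↔ ∀ (c : E) (rad : ℝ), 0 ≤ rad → p ∉ closedBall c rad →
      sampleCount x (closedBall c rad) ≤ n - k := by
  have hbdd : BddAbove {r : ℝ | ∃ (c : E) (rad : ℝ), 0 ≤ rad ∧ p ∉ closedBall c rad ∧
      r = (sampleCount x (closedBall c rad) : ℝ) / n} := by
    refine ⟨1, ?_⟩
    rintro _ ⟨c, rad, -, -, rfl⟩
    exact div_le_one_of_le₀ (by exact_mod_cast sampleCount_le x _) n.cast_nonneg
  have hk : 0 ≤ 1 - (k : ℝ) / n :=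
    sub_nonneg.mpr (div_le_one_of_le₀ (by exact_mod_cast hkn) n.cast_nonneg)
  rw [ballDepth, le_sub_comm, Real.sSup_le_iff_of_nonneg hbdd hk]
  simp only [Set.mem_ofPred_eq, forall_exists_index, and_imp]
  constructor
  · intro h c rad hrad hp
    exact (Nat.cast_div_le_one_sub_cast_div_iff hn hkn).mp (h _ c rad hrad hp rfl)
  · rintro h _ c rad hrad hp rfl
    exact (Nat.cast_div_le_one_sub_cast_div_iff hn hkn).mpr (h c rad hrad hp)

end BallDepth

theorem sample_level_set_eq_iInter_balls_general (d n k : ℕ) (hn : 0 < n) (hkn : k ≤ n)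
    (x : Fin n → EuclideanSpace ℝ (Fin d)) :
    {p : EuclideanSpace ℝ (Fin d) |
        (k : ℝ) / n ≤ 1 - sSup {r : ℝ | ∃ (c : EuclideanSpace ℝ (Fin d)) (rad : ℝ),
          0 ≤ rad ∧ p ∉ Metric.closedBall c rad ∧
          r = ({i : Fin n | x i ∈ Metric.closedBall c rad}.ncard : ℝ) / n}} =
      ⋂ (c : EuclideanSpace ℝ (Fin d)), ⋂ (rad : ℝ), ⋂ (_ : 0 ≤ rad),
        ⋂ (_ : n - k + 1 ≤ {i : Fin n | x i ∈ Metric.closedBall c rad}.ncard),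
          Metric.closedBall c rad := by
  ext p
  simp only [Set.mem_iInter]
  refine (div_le_ballDepth_iff hn hkn x p).trans ?_
  refine forall₂_congr fun c rad => imp_congr_right fun _ => ?_
  rw [not_imp_comm, not_le, Nat.lt_iff_add_one_le]
  rfl

theorem sample_level_set_eq_iInter_balls (d n k : ℕ) (hn : 0 < n) (hk1 : 1 ≤ k) (hkn : k ≤ n)
    (x : Fin n → EuclideanSpace ℝ (Fin d)) :
    {p : EuclideanSpace ℝ (Fin d) |
        (k : ℝ) / n ≤ 1 - sSup {r : ℝ | ∃ (c : EuclideanSpace ℝ (Fin d)) (rad : ℝ),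
          0 ≤ rad ∧ p ∉ Metric.closedBall c rad ∧
          r = ({i : Fin n | x i ∈ Metric.closedBall c rad}.ncard : ℝ) / n}} =
      ⋂ (c : EuclideanSpace ℝ (Fin d)), ⋂ (rad : ℝ), ⋂ (_ : 0 ≤ rad),
        ⋂ (_ : n - k + 1 ≤ {i : Fin n | x i ∈ Metric.closedBall c rad}.ncard),
          Metric.closedBall c rad :=
  sample_level_set_eq_iInter_balls_general d n k hn hkn x
end

section
/- The approximate depth computed by ball intersections never exceeds the exact Tukey depth: for a sample point x, if x belongs to the discrete approximation Ŝ_{k/n} (an intersection of finitely many balls each containing at least n−k+1 sample points, intersected with the data set), then the exact Tukey depth of x is at least k/n. -/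
open scoped RealInnerProductSpace

/-! If `p` lies in the open halfspace `c < ⟪u, ·⟫`, then every sample point outside it lies in a
huge ball whose centre is pushed far into the complementary halfspace, and which therefore misses
`p`. So at most `n - k` sample points avoid the halfspace, i.e. it contains at least `k` of them. -/

open Metric

section

variable {E : Type*} [NormedAddCommGroup E] [InnerProductSpace ℝ E]

theorem exists_closedBall_superset_notMem_of_subset_halfspace {S : Set E} {u p : E} {c : ℝ}
    (hu : u ≠ 0) (hp : c < ⟪u, p⟫) (hS : ∀ a ∈ S, ⟪u, a⟫ ≤ c) (hbdd : Bornology.IsBounded S) :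
    ∃ z r, 0 ≤ r ∧ S ⊆ closedBall z r ∧ p ∉ closedBall z r := by
  obtain ⟨R, hR⟩ := hbdd.subset_closedBall p
  set δ := ⟪u, p⟫ - c
  have hδ : 0 < δ := sub_pos.mpr hp
  set t := (R ^ 2 + 1) / (2 * δ)
  have ht : 0 < t := by positivity
  have htδ : 2 * t * δ = R ^ 2 + 1 := by simp only [t]; field_simp
  refine ⟨p - t • u, √(R ^ 2 - 2 * t * δ + t ^ 2 * ‖u‖ ^ 2), Real.sqrt_nonneg _, ?_, ?_⟩
  · intro a ha
    have hexpand : ‖a - (p - t • u)‖ ^ 2 = ‖a - p‖ ^ 2 + 2 * t * ⟪u, a - p⟫ + t ^ 2 * ‖u‖ ^ 2 := by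
      rw [show a - (p - t • u) = (a - p) + t • u by abel, norm_add_sq_real, norm_smul,
        real_inner_smul_right, real_inner_comm, Real.norm_eq_abs, mul_pow, sq_abs]
      ring
    have hap : ‖a - p‖ ≤ R := by simpa [dist_eq_norm] using hR ha
    rw [mem_closedBall]
    apply Real.le_sqrt_of_sq_le
    rw [dist_eq_norm, hexpand, inner_sub_right]
    nlinarith [hS a ha, norm_nonneg (a - p)]
  · rw [mem_closedBall, dist_eq_norm, sub_sub_cancel, norm_smul, Real.norm_eq_abs, abs_of_pos ht,
      not_le, Real.sqrt_lt' (by positivity)]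
    nlinarith

end

theorem mem_all_balls_imp_depth_ge_general (d n k : ℕ) (hkn : k ≤ n)
    (x : Fin n → EuclideanSpace ℝ (Fin d)) (p : EuclideanSpace ℝ (Fin d))
    (hp : ∀ (c : EuclideanSpace ℝ (Fin d)) (r : ℝ), 0 ≤ r →
      n - k + 1 ≤ {i : Fin n | x i ∈ Metric.closedBall c r}.ncard →
      p ∈ Metric.closedBall c r) :
    ∀ H : Set (EuclideanSpace ℝ (Fin d)), IsOpenHalfspace H → p ∈ H →
      (k : ℝ) / n ≤ ({i : Fin n | x i ∈ H}.ncard : ℝ) / n := by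
  rintro H ⟨u, c, hu, rfl⟩ hpH
  have hout : {i : Fin n | ⟪u, x i⟫ ≤ c}.ncard ≤ n - k := by
    by_contra! hbig
    obtain ⟨z, r, hr, hsub, hpz⟩ := exists_closedBall_superset_notMem_of_subset_halfspace
      (S := x '' {i | ⟪u, x i⟫ ≤ c}) hu hpH (by rintro _ ⟨i, hi, rfl⟩; exact hi)
      (Set.toFinite _).isBounded
    exact hpz (hp z r hr (hbig.trans_le (Set.ncard_le_ncard fun i hi => hsub ⟨i, hi, rfl⟩)))
  have hsplit : {i : Fin n | x i ∈ {y | c < ⟪u, y⟫}}.ncard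
      + {i : Fin n | ⟪u, x i⟫ ≤ c}.ncard = n := by
    rw [show {i : Fin n | ⟪u, x i⟫ ≤ c} = {i : Fin n | x i ∈ {y | c < ⟪u, y⟫}}ᶜ by ext; simp,
      Set.ncard_add_ncard_compl, Nat.card_fin]
  gcongr
  exact_mod_cast (by omega : k ≤ {i : Fin n | x i ∈ {y | c < ⟪u, y⟫}}.ncard)

theorem mem_all_balls_imp_depth_ge (d n k : ℕ) (hn : 0 < n) (hk1 : 1 ≤ k) (hkn : k ≤ n)
    (x : Fin n → EuclideanSpace ℝ (Fin d)) (p : EuclideanSpace ℝ (Fin d))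
    (hp : ∀ (c : EuclideanSpace ℝ (Fin d)) (r : ℝ), 0 ≤ r →
      n - k + 1 ≤ {i : Fin n | x i ∈ Metric.closedBall c r}.ncard →
      p ∈ Metric.closedBall c r) :
    ∀ H : Set (EuclideanSpace ℝ (Fin d)), IsOpenHalfspace H → p ∈ H →
      (k : ℝ) / n ≤ ({i : Fin n | x i ∈ H}.ncard : ℝ) / n :=
  mem_all_balls_imp_depth_ge_general d n k hkn x p hp
end
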